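/- arXiv:2306.03200 — 3 statements merged into one kernel-verified Lean document; each statement's English description precedes it below -/
import Mathlib

section
/- Every vector of norm 4 in the E8 lattice can be written as the sum of two vectors of norm 2 (roots) in E8. -/
/-!
If `b` is a root with `dot8 v b = 2`, then `v - b` lies in E8 (a lattice) and has norm
`4 - 2·2 + 2 = 2`. A norm-4 vector of E8 has shape `(±2, 0⁷)`, `(±1⁴, 0⁴)` or `(±3/2, (±1/2)⁷)`
up to permutation, so it has two coordinates `j ≠ l` with `|v j| + |v l| = 2`; the root
`±e_j ± e_l` with the signs of `v j` and `v l` does the job.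
-/

noncomputable section

/-- The standard inner product on ℝ⁸. -/
def dot8 (u v : Fin 8 → ℝ) : ℝ := ∑ i, u i * v i

/-- Membership in the E8 lattice: all coordinates integers or all half-odd-integers,
with even coordinate sum. -/
def inE8 (v : Fin 8 → ℝ) : Prop :=
  ((∀ i, ∃ n : ℤ, v i = (n : ℝ)) ∨ (∀ i, ∃ n : ℤ, v i = (n : ℝ) + 1 / 2)) ∧
    ∃ m : ℤ, (∑ i, v i) = 2 * (m : ℝ)

open Finset

theorem dot8_eq_dotProduct (u w : Fin 8 → ℝ) : dot8 u w = u ⬝ᵥ w := rfl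

theorem dot8_sub_self (u w : Fin 8 → ℝ) :
    dot8 (u - w) (u - w) = dot8 u u - 2 * dot8 u w + dot8 w w := by
  simp only [dot8_eq_dotProduct, sub_dotProduct, dotProduct_sub, dotProduct_comm w u]
  ring

theorem inE8.sub {u w : Fin 8 → ℝ} (hu : inE8 u) (hw : inE8 w) : inE8 (u - w) := by
  obtain ⟨hu, m, hm⟩ := hu
  obtain ⟨hw, m', hm'⟩ := hw
  refine ⟨?_, m - m', by
    simp only [Pi.sub_apply, sum_sub_distrib, hm, hm']; push_cast; ring⟩
  rcases hu with hu | hu <;> rcases hw with hw | hw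
  · exact Or.inl fun i => by
      obtain ⟨a, ha⟩ := hu i
      obtain ⟨b, hb⟩ := hw i
      exact ⟨a - b, by rw [Pi.sub_apply, ha, hb]; push_cast; ring⟩
  · exact Or.inr fun i => by
      obtain ⟨a, ha⟩ := hu i
      obtain ⟨b, hb⟩ := hw i
      exact ⟨a - b - 1, by rw [Pi.sub_apply, ha, hb]; push_cast; ring⟩
  · exact Or.inr fun i => by
      obtain ⟨a, ha⟩ := hu i
      obtain ⟨b, hb⟩ := hw i
      exact ⟨a - b, by rw [Pi.sub_apply, ha, hb]; push_cast; ring⟩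
  · exact Or.inl fun i => by
      obtain ⟨a, ha⟩ := hu i
      obtain ⟨b, hb⟩ := hw i
      exact ⟨a - b, by rw [Pi.sub_apply, ha, hb]; push_cast; ring⟩

theorem inE8_single_add_single (j l : Fin 8) {s t : ℤ} (hst : Even (s + t)) :
    inE8 (Pi.single j (s : ℝ) + Pi.single l (t : ℝ)) := by
  obtain ⟨m, hm⟩ := hst
  refine ⟨Or.inl fun i => ⟨(Pi.single j s + Pi.single l t : Fin 8 → ℤ) i, ?_⟩, m, ?_⟩
  · simp only [Pi.add_apply, Pi.single_apply]
    split_ifs <;> simp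
  · simp only [Pi.add_apply, sum_add_distrib, sum_pi_single', mem_univ, if_true]
    exact_mod_cast hm.trans (two_mul m).symm

theorem exists_abs_eq_one_mul_eq_abs (r : ℝ) : ∃ s : ℤ, |s| = 1 ∧ r * s = |r| := by
  rcases le_total 0 r with h | h
  · exact ⟨1, by simp, by simp [abs_of_nonneg h]⟩
  · exact ⟨-1, by simp, by simp [abs_of_nonpos h]⟩

theorem exists_root_dot8_eq_abs_add_abs (v : Fin 8 → ℝ) {j l : Fin 8} (hjl : j ≠ l) :
    ∃ b, inE8 b ∧ dot8 b b = 2 ∧ dot8 v b = |v j| + |v l| := by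
  obtain ⟨s, hs, hvs⟩ := exists_abs_eq_one_mul_eq_abs (v j)
  obtain ⟨t, ht, hvt⟩ := exists_abs_eq_one_mul_eq_abs (v l)
  have hsq : ∀ r : ℤ, |r| = 1 → (r : ℝ) * r = 1 := fun r hr => by
    rw [← abs_mul_abs_self, ← Int.cast_abs, hr, Int.cast_one, one_mul]
  have hst : Even (s + t) := by
    rw [abs_eq zero_le_one] at hs ht
    exact ⟨(s + t) / 2, by omega⟩
  refine ⟨Pi.single j (s : ℝ) + Pi.single l (t : ℝ), inE8_single_add_single j l hst, ?_, ?_⟩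
  · simp only [dot8_eq_dotProduct, dotProduct_add, dotProduct_single, Pi.add_apply,
      Pi.single_eq_same, Pi.single_eq_of_ne hjl, Pi.single_eq_of_ne hjl.symm, add_zero, zero_add,
      hsq s hs, hsq t ht]
    norm_num
  · simp [dot8_eq_dotProduct, dotProduct_add, hvs, hvt]

theorem apply_eq_zero_of_sum_le_apply {ι M : Type*} [Fintype ι] [AddCommMonoid M]
    [PartialOrder M] [IsOrderedCancelAddMonoid M] {f : ι → M} (hf : ∀ i, 0 ≤ f i) {j l : ι} (hjl : j ≠ l)
    (hj : ∑ i, f i ≤ f j) : f l = 0 := by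
  classical
  have hpair := sum_le_sum_of_subset_of_nonneg (subset_univ {j, l}) fun i _ _ => hf i
  rw [sum_pair hjl] at hpair
  exact le_antisymm ((add_le_iff_nonpos_right (f j)).mp (hpair.trans hj)) (hf l)

theorem Int.exists_ne_abs_add_abs_eq_two_of_sum_sq_eq_four {ι : Type*} [Fintype ι]
    [Nontrivial ι] (n : ι → ℤ) (h : ∑ i, n i ^ 2 = 4) : ∃ j l, j ≠ l ∧ |n j| + |n l| = 2 := by
  have hsq_nonneg : ∀ i, 0 ≤ n i ^ 2 := fun i => sq_nonneg (n i)
  have hsq_le : ∀ i, n i ^ 2 ≤ 4 := fun i =>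
    h ▸ single_le_sum (fun i _ => hsq_nonneg i) (mem_univ i)
  have hbig : ∀ j, 2 ≤ |n j| → ∀ l, j ≠ l → n l = 0 := fun j hj l hjl =>
    (pow_eq_zero_iff two_ne_zero).mp <|
      apply_eq_zero_of_sum_le_apply hsq_nonneg hjl (by nlinarith [sq_abs (n j)])
  obtain ⟨j, hj⟩ : ∃ j, n j ≠ 0 := by
    by_contra! h0
    simp [h0] at h
  by_cases hj2 : 2 ≤ |n j|
  · obtain ⟨l, hlj⟩ := exists_ne j
    refine ⟨j, l, hlj.symm, ?_⟩
    rw [hbig j hj2 l hlj.symm, abs_zero, add_zero]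
    nlinarith [sq_abs (n j), hsq_le j]
  · obtain ⟨k, hjk, hk⟩ : ∃ k, j ≠ k ∧ n k ≠ 0 := by
      by_contra! hk
      rw [Fintype.sum_eq_single j fun i hi => by simp [hk i (Ne.symm hi)]] at h
      have : |n j| ≤ 1 := by omega
      nlinarith [sq_abs (n j), abs_nonneg (n j)]
    have hk2 : ¬ 2 ≤ |n k| := fun hk2 => hj (hbig k hk2 j hjk.symm)
    have hj1 := Int.one_le_abs hj
    have hk1 := Int.one_le_abs hk
    exact ⟨j, k, hjk, by omega⟩

theorem Int.exists_ne_abs_add_abs_eq_four_of_odd_of_sum_sq_eq_sixteen (c : Fin 8 → ℤ)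
    (hc : ∀ i, Odd (c i)) (h : ∑ i, c i ^ 2 = 16) : ∃ j l, j ≠ l ∧ |c j| + |c l| = 4 := by
  have habs : ∀ i, |c i| = 1 ∨ 3 ≤ |c i| := fun i => by
    obtain ⟨m, hm⟩ := hc i
    rcases abs_cases (c i) with ⟨h, _⟩ | ⟨h, _⟩ <;> omega
  have hsq : ∀ i, c i ^ 2 = |c i| ^ 2 := fun i => (sq_abs (c i)).symm
  -- the excess of each odd square over `1`; a coordinate with `|c j| ≥ 3` takes all of it
  set d : Fin 8 → ℤ := fun i => c i ^ 2 - 1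
  have hd_nonneg : ∀ i, 0 ≤ d i := fun i => by
    rcases habs i with h1 | h3 <;> nlinarith [hsq i]
  have hd_sum : ∑ i, d i = 8 := by simp [d, sum_sub_distrib, h]
  obtain ⟨j, hj⟩ : ∃ j, 3 ≤ |c j| := by
    by_contra! hlt
    have hd0 : ∀ i, d i = 0 := fun i => by
      show c i ^ 2 - 1 = 0
      rw [hsq, (habs i).resolve_right (hlt i).not_ge]
      norm_num
    simp [hd0] at hd_sum
  obtain ⟨l, hlj⟩ := exists_ne j
  have hdl := apply_eq_zero_of_sum_le_apply hd_nonneg hlj.symm (by nlinarith [hsq j])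
  have hdj : d j ≤ 8 := hd_sum ▸ single_le_sum (fun i _ => hd_nonneg i) (mem_univ j)
  refine ⟨j, l, hlj.symm, ?_⟩
  rcases habs l with hl1 | hl3
  · nlinarith [hsq j]
  · nlinarith [hsq l]

theorem inE8.exists_ne_abs_add_abs_eq_two {v : Fin 8 → ℝ} (hv : inE8 v) (h4 : dot8 v v = 4) :
    ∃ j l, j ≠ l ∧ |v j| + |v l| = 2 := by
  rcases hv.1 with hint | hhalf
  · choose n hn using hint
    have hn4 : ∑ i, n i ^ 2 = 4 := by
      have : ((∑ i, n i ^ 2 : ℤ) : ℝ) = 4 := by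
        push_cast
        simp only [← h4, dot8, hn, sq]
      exact_mod_cast this
    obtain ⟨j, l, hjl, h⟩ := Int.exists_ne_abs_add_abs_eq_two_of_sum_sq_eq_four n hn4
    exact ⟨j, l, hjl, by simp only [hn, ← Int.cast_abs]; exact_mod_cast h⟩
  · choose n hn using hhalf
    have hc : ∀ i, 2 * (n i : ℝ) + 1 = 2 * v i := fun i => by rw [hn]; ring
    have hc16 : ∑ i, (2 * n i + 1) ^ 2 = 16 := by
      have : ((∑ i, (2 * n i + 1) ^ 2 : ℤ) : ℝ) = 16 := calc
        _ = 4 * dot8 v v := by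
          push_cast
          simp only [dot8, mul_sum, hc]
          exact sum_congr rfl fun i _ => by ring
        _ = 16 := by rw [h4]; norm_num
      exact_mod_cast this
    obtain ⟨j, l, hjl, h⟩ := Int.exists_ne_abs_add_abs_eq_four_of_odd_of_sum_sq_eq_sixteen _
      (fun i => odd_two_mul_add_one (n i)) hc16
    have h' : ((|2 * n j + 1| + |2 * n l + 1| : ℤ) : ℝ) = 4 := by exact_mod_cast h
    push_cast at h'
    simp only [hc, abs_mul, abs_two] at h'
    exact ⟨j, l, hjl, by linarith⟩

/-- Every vector of norm 4 in the E8 lattice is a sum of two roots (norm-2 vectors). -/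
theorem e8_norm_four_eq_sum_of_two_roots (v : Fin 8 → ℝ) (hv : inE8 v)
    (h4 : dot8 v v = 4) :
    ∃ a b : Fin 8 → ℝ, inE8 a ∧ inE8 b ∧ dot8 a a = 2 ∧ dot8 b b = 2 ∧ v = a + b := by
  obtain ⟨j, l, hjl, hvjl⟩ := hv.exists_ne_abs_add_abs_eq_two h4
  obtain ⟨b, hb, hbb, hvb⟩ := exists_root_dot8_eq_abs_add_abs v hjl
  refine ⟨v - b, b, hv.sub hb, hb, ?_, hbb, (sub_add_cancel v b).symm⟩
  rw [dot8_sub_self, h4, hvb, hvjl, hbb]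
  norm_num
end
end

section
/- Every nonzero equivalence class in E8/2E8 contains a vector of norm 2 or a vector of norm 4. -/
noncomputable section

/-!
In doubled coordinates `c = 2u`, E8 becomes the lattice `L` of integer vectors of uniform
parity with coordinate sum divisible by 4, and `x ∈ 2L` as soon as all `x i` are congruent
mod 4 to one even constant and `8 ∣ ∑ i, x i`. Reducing `c` coordinatewise mod 4 gives a
representative `b` of `c + 2L` up to the sum condition: entries `±1` if `c` is odd, entries in
`{0, 2}` if `c` is even, where shifting by 2 first leaves at most four 2's. If the sum is off
by 4 mod 8, changing one coordinate by `±4` repairs it, and choosing that coordinate well keeps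
the norm `∑ i, b i ^ 2` at 8 or 16, i.e. norm 2 or 4 in E8.
-/

open Finset

/-- The vectors `2 • v` with `v ∈ E8`. -/
def doubledE8 : AddSubgroup (Fin 8 → ℤ) where
  carrier := {c | (∀ i j, c i ≡ c j [ZMOD 2]) ∧ 4 ∣ ∑ i, c i}
  add_mem' ha hb := ⟨fun i j => (ha.1 i j).add (hb.1 i j), by
    simpa only [Pi.add_apply, sum_add_distrib] using dvd_add ha.2 hb.2⟩
  zero_mem' := ⟨fun _ _ => rfl, by simp⟩
  neg_mem' ha := ⟨fun i j => (ha.1 i j).neg, by simpa [sum_neg_distrib] using ha.2⟩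

theorem inE8_iff (u : Fin 8 → ℝ) :
    inE8 u ↔ ∃ c ∈ doubledE8, u = fun i => (c i : ℝ) / 2 := by
  constructor
  · rintro ⟨hpar, m, hm⟩
    obtain ⟨c, hcpar, rfl⟩ : ∃ c : Fin 8 → ℤ,
        (∀ i j, c i ≡ c j [ZMOD 2]) ∧ u = fun i => (c i : ℝ) / 2 := by
      rcases hpar with h | h <;> choose n hn using h
      · refine ⟨fun i => 2 * n i, fun i j => ?_, funext fun i => ?_⟩
        · simp only [Int.ModEq]; omega
        · simp [hn]
      · refine ⟨fun i => 2 * n i + 1, fun i j => ?_, funext fun i => ?_⟩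
        · simp only [Int.ModEq]; omega
        · simp only [hn]; push_cast; ring
    refine ⟨c, ⟨hcpar, m, ?_⟩, rfl⟩
    rw [← sum_div] at hm
    exact_mod_cast (by linarith : (∑ i, (c i : ℝ)) = 4 * m)
  · rintro ⟨c, ⟨hpar, m, hm⟩, rfl⟩
    have hpar0 : ∀ i, c i % 2 = c 0 % 2 := fun i => hpar i 0
    refine ⟨?_, m, ?_⟩
    · rcases Int.emod_two_eq_zero_or_one (c 0) with h0 | h0
      · refine .inl fun i => ?_
        obtain ⟨k, hk⟩ : ∃ k, c i = 2 * k := ⟨c i / 2, by have := hpar0 i; omega⟩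
        exact ⟨k, by simp only [hk]; push_cast; ring⟩
      · refine .inr fun i => ?_
        obtain ⟨k, hk⟩ : ∃ k, c i = 2 * k + 1 := ⟨c i / 2, by have := hpar0 i; omega⟩
        exact ⟨k, by simp only [hk]; push_cast; ring⟩
    · rw [← sum_div]
      have : (∑ i, (c i : ℝ)) = 4 * m := by exact_mod_cast hm
      linarith

theorem dot8_half (e : Fin 8 → ℤ) :
    dot8 (fun i => (e i : ℝ) / 2) (fun i => (e i : ℝ) / 2) = ((∑ i, e i ^ 2 : ℤ) : ℝ) / 4 := by
  simp only [dot8, Int.cast_sum, Int.cast_pow, sum_div]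
  exact sum_congr rfl fun i _ => by ring

theorem sum_sq_add_single {ι R : Type*} [Fintype ι] [DecidableEq ι] [CommRing R]
    (b : ι → R) (p : ι) (a : R) :
    ∑ i, (b + Pi.single p a : ι → R) i ^ 2 = ∑ i, b i ^ 2 + (2 * b p + a) * a := by
  have h : ∀ i, (b + Pi.single p a : ι → R) i ^ 2 =
      b i ^ 2 + Pi.single (M := fun _ => R) p ((2 * b p + a) * a) i := by
    intro i
    rcases eq_or_ne i p with rfl | hi
    · simp only [Pi.add_apply, Pi.single_eq_same]; ring
    · simp [hi]
  rw [sum_congr rfl fun i _ => h i, sum_add_distrib]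
  simp

theorem four_dvd_sum_of_modEq {x : Fin 8 → ℤ} {t : ℤ} (hx : ∀ i, x i ≡ t [ZMOD 4]) :
    4 ∣ ∑ i, x i := by
  have h : 4 ∣ ∑ i, (x i - t) := dvd_sum fun i _ => (hx i).symm.dvd
  simp only [sum_sub_distrib, sum_const, card_univ, Fintype.card_fin, nsmul_eq_mul] at h
  push_cast at h
  omega

theorem exists_mem_doubledE8_eq_two_smul {x : Fin 8 → ℤ} {t : ℤ} (ht : 2 ∣ t)
    (hx : ∀ i, x i ≡ t [ZMOD 4]) (hsum : 8 ∣ ∑ i, x i) :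
    ∃ d ∈ doubledE8, x = 2 • d := by
  have hx2 : ∀ i, x i = 2 * (x i / 2) := fun i => by
    have := hx i; unfold Int.ModEq at this; omega
  refine ⟨fun i => x i / 2, ⟨fun i j => ?_, ?_⟩, funext fun i => by simpa using hx2 i⟩
  · have := hx i; have := hx j; unfold Int.ModEq at *; dsimp only; omega
  · have : ∑ i, x i = 2 * ∑ i, x i / 2 := by
      rw [mul_sum]; exact sum_congr rfl fun i _ => hx2 i
    dsimp only; omega

/-- The sum of `c - b` is `0` mod 4 automatically; when it is `4` mod 8, moving `b p` by `a`
fixes it. -/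
theorem exists_eq_two_smul_sub_or_sub_add_single (c b : Fin 8 → ℤ) {t : ℤ} (ht : 2 ∣ t)
    (hcb : ∀ i, c i - b i ≡ t [ZMOD 4]) (p : Fin 8) {a : ℤ} (ha : a ≡ 4 [ZMOD 8]) :
    (∃ d ∈ doubledE8, c - b = 2 • d) ∨ ∃ d ∈ doubledE8, c - (b + Pi.single p a) = 2 • d := by
  by_cases h8 : 8 ∣ ∑ i, (c i - b i)
  · exact .inl (exists_mem_doubledE8_eq_two_smul ht hcb h8)
  · refine .inr (exists_mem_doubledE8_eq_two_smul ht (fun i => ?_) ?_)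
    · rcases eq_or_ne i p with rfl | hi
      · have := hcb i
        simp only [Int.ModEq] at this ha ⊢
        simp only [Pi.sub_apply, Pi.add_apply, Pi.single_eq_same]
        omega
      · simpa [hi] using hcb i
    · have h4 := four_dvd_sum_of_modEq hcb
      simp only [Int.ModEq] at ha
      simp only [sum_sub_distrib, Pi.sub_apply, Pi.add_apply, sum_add_distrib, sum_pi_single',
        mem_univ, ↓reduceIte] at h4 h8 ⊢
      omega

theorem exists_short_of_odd {c : Fin 8 → ℤ} (hodd : ∀ i, c i % 2 = 1) :
    ∃ e : Fin 8 → ℤ, (∑ i, e i ^ 2 = 8 ∨ ∑ i, e i ^ 2 = 16) ∧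
      ∃ d ∈ doubledE8, c - e = 2 • d := by
  set b : Fin 8 → ℤ := fun i => (c i + 1) % 4 - 1
  have hb : ∀ i, b i = 1 ∨ b i = -1 := fun i => by have := hodd i; simp only [b]; omega
  have hb2 : ∀ i, b i ^ 2 = 1 := fun i => by rcases hb i with h | h <;> simp [h]
  have hnorm : ∑ i, b i ^ 2 = 8 := by simp [hb2]
  have hcb : ∀ i, c i - b i ≡ 0 [ZMOD 4] := fun i => by simp only [b, Int.ModEq]; omega
  have ha : -4 * b 0 ≡ 4 [ZMOD 8] := by unfold Int.ModEq; rcases hb 0 with h | h <;> simp [h]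
  rcases exists_eq_two_smul_sub_or_sub_add_single c b (dvd_zero 2) hcb 0 ha with h | h
  · exact ⟨b, .inl hnorm, h⟩
  · refine ⟨_, .inr ?_, h⟩
    rw [sum_sq_add_single, hnorm]
    linear_combination 8 * hb2 0

theorem exists_even_sum_add_emod_four_le {c : Fin 8 → ℤ} (heven : ∀ i, c i % 2 = 0) :
    ∃ t : ℤ, 2 ∣ t ∧ ∑ i, (c i + t) % 4 ≤ 8 := by
  have h16 : ∑ i, c i % 4 + ∑ i, (c i + 2) % 4 = 16 := by
    rw [← sum_add_distrib]
    trans ∑ _ : Fin 8, (2 : ℤ)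
    · exact sum_congr rfl fun i _ => by have := heven i; omega
    · simp
  by_cases h : ∑ i, c i % 4 ≤ 8
  · exact ⟨0, dvd_zero 2, by simpa using h⟩
  · exact ⟨2, dvd_refl 2, by omega⟩

theorem exists_short_of_even {c : Fin 8 → ℤ} (heven : ∀ i, c i % 2 = 0)
    (hsum : 4 ∣ ∑ i, c i) (hc : ¬ ∃ d ∈ doubledE8, c = 2 • d) :
    ∃ e : Fin 8 → ℤ, (∑ i, e i ^ 2 = 8 ∨ ∑ i, e i ^ 2 = 16) ∧
      ∃ d ∈ doubledE8, c - e = 2 • d := by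
  obtain ⟨_, ⟨k, rfl⟩, hb8⟩ := exists_even_sum_add_emod_four_le heven
  set b : Fin 8 → ℤ := fun i => (c i + 2 * k) % 4
  replace hb8 : ∑ i, b i ≤ 8 := hb8
  have hb : ∀ i, b i = 0 ∨ b i = 2 := fun i => by have := heven i; simp only [b]; omega
  have hb_nonneg : ∀ i, 0 ≤ b i := fun i => by rcases hb i with h | h <;> simp [h]
  have hcb : ∀ i, c i - b i ≡ -(2 * k) [ZMOD 4] := fun i => by
    simp only [b, Int.ModEq]; omega
  have ht : 2 ∣ -(2 * k) := ⟨-k, by ring⟩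
  have hnorm : ∑ i, b i ^ 2 = 2 * ∑ i, b i := by
    rw [mul_sum]
    exact sum_congr rfl fun i _ => by rcases hb i with h | h <;> simp [h]
  have hbsum : 4 ∣ ∑ i, b i := by
    have := four_dvd_sum_of_modEq hcb
    rw [sum_sub_distrib] at this
    exact (dvd_sub_right hsum).1 this
  have hb0 : 0 ≤ ∑ i, b i := sum_nonneg fun i _ => hb_nonneg i
  by_cases hzero : ∑ i, b i = 0
  · have hb_eq : b = 0 := funext fun i => by
      simpa using (sum_eq_zero_iff_of_nonneg fun i _ => hb_nonneg i).1 hzero i (mem_univ i)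
    rcases exists_eq_two_smul_sub_or_sub_add_single c b ht hcb 0 (a := 4) rfl with h | h
    · exact absurd (by simpa [hb_eq] using h) hc
    · refine ⟨_, .inr ?_, h⟩
      rw [sum_sq_add_single, hnorm, hzero, hb_eq]
      simp
  · obtain ⟨p, -, hp⟩ := exists_ne_zero_of_sum_ne_zero hzero
    have hp2 : b p = 2 := (hb p).resolve_left hp
    have hshort : ∑ i, b i ^ 2 = 8 ∨ ∑ i, b i ^ 2 = 16 := by omega
    rcases exists_eq_two_smul_sub_or_sub_add_single c b ht hcb p (a := -4) (by decide)
      with h | h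
    · exact ⟨b, hshort, h⟩
    · refine ⟨_, ?_, h⟩
      rw [sum_sq_add_single, hp2]
      simpa using hshort

theorem exists_short_of_mem_doubledE8 {c : Fin 8 → ℤ} (hc : c ∈ doubledE8)
    (hnz : ¬ ∃ d ∈ doubledE8, c = 2 • d) :
    ∃ e ∈ doubledE8, (∑ i, e i ^ 2 = 8 ∨ ∑ i, e i ^ 2 = 16) ∧
      ∃ d ∈ doubledE8, c - e = 2 • d := by
  obtain ⟨e, he, d, hd, hced⟩ : ∃ e : Fin 8 → ℤ, (∑ i, e i ^ 2 = 8 ∨ ∑ i, e i ^ 2 = 16) ∧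
      ∃ d ∈ doubledE8, c - e = 2 • d := by
    have hpar0 : ∀ i, c i % 2 = c 0 % 2 := fun i => hc.1 i 0
    rcases Int.emod_two_eq_zero_or_one (c 0) with h0 | h0
    · exact exists_short_of_even (fun i => (hpar0 i).trans h0) hc.2 hnz
    · exact exists_short_of_odd fun i => (hpar0 i).trans h0
  refine ⟨e, ?_, he, d, hd, hced⟩
  rw [show e = c - 2 • d by rw [← hced, sub_sub_cancel]]
  exact sub_mem hc (nsmul_mem hd 2)

/-- Every nonzero class in E8/2E8 contains a vector of norm 2 or a vector of norm 4. -/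
theorem e8_mod_two_contains_short_vector (u : Fin 8 → ℝ) (hu : inE8 u)
    (hnz : ¬ ∃ w : Fin 8 → ℝ, inE8 w ∧ u = (2 : ℝ) • w) :
    ∃ v : Fin 8 → ℝ, inE8 v ∧ (dot8 v v = 2 ∨ dot8 v v = 4) ∧
      ∃ w : Fin 8 → ℝ, inE8 w ∧ u - v = (2 : ℝ) • w := by
  obtain ⟨c, hc, rfl⟩ := (inE8_iff u).1 hu
  have hc2 : ¬ ∃ d ∈ doubledE8, c = 2 • d := by
    rintro ⟨d, hd, rfl⟩
    refine hnz ⟨_, (inE8_iff _).2 ⟨d, hd, rfl⟩, funext fun i => ?_⟩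
    simp only [Pi.smul_apply, nsmul_eq_mul, smul_eq_mul]
    push_cast
    ring
  obtain ⟨e, he, hnorm, d, hd, hced⟩ := exists_short_of_mem_doubledE8 hc hc2
  refine ⟨_, (inE8_iff _).2 ⟨e, he, rfl⟩, ?_, _, (inE8_iff _).2 ⟨d, hd, rfl⟩, funext fun i => ?_⟩
  · rw [dot8_half]
    rcases hnorm with h | h <;> norm_num [h]
  · have := congrArg (fun x : Fin 8 → ℤ => (x i : ℝ)) hced
    simp only [Pi.sub_apply, Pi.smul_apply, nsmul_eq_mul, smul_eq_mul] at this ⊢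
    push_cast at this
    linarith
end
end

section
/- Ramanujan's identity: the normalized Eisenstein series satisfy q·(d/dq)E_4 = (E_2·E_4 − E_6)/3 as formal power series in q, where E_2 = 1 − 24·Σ σ_1(n)q^n, E_4 = 1 + 240·Σ σ_3(n)q^n, and E_6 = 1 − 504·Σ σ_5(n)q^n. -/
noncomputable section

/-- The k-th divisor power sum function. -/
def sigmaFn (k n : ℕ) : ℕ := ∑ d ∈ n.divisors, d ^ k

/-- The normalized Eisenstein series E₂ as a formal power series. -/
def Eis2 : PowerSeries ℚ :=
  PowerSeries.mk fun n => if n = 0 then 1 else -24 * (sigmaFn 1 n : ℚ)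

/-- The normalized Eisenstein series E₄ as a formal power series. -/
def Eis4 : PowerSeries ℚ :=
  PowerSeries.mk fun n => if n = 0 then 1 else 240 * (sigmaFn 3 n : ℚ)

/-- The normalized Eisenstein series E₆ as a formal power series. -/
def Eis6 : PowerSeries ℚ :=
  PowerSeries.mk fun n => if n = 0 then 1 else -504 * (sigmaFn 5 n : ℚ)

/-- The formal derivation D = q·d/dq, sending Σ aₙqⁿ to Σ n·aₙqⁿ. -/
def Dq (F : PowerSeries ℚ) : PowerSeries ℚ :=
  PowerSeries.mk fun n => (n : ℚ) * PowerSeries.coeff (R := ℚ) n F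

/-!
Comparing coefficients, the identity amounts to the convolution formula
`240 ∑_{i+j=n} σ₁(i) σ₃(j) = 21 σ₅(n) + 10 σ₃(n) - σ₁(n) - 30 n σ₃(n)`,
whose left side is `240 ∑ a b³` over the representations `n = a x + b y` in positive
integers. This is proved by Liouville's elementary method:
`(a + b)⁴ - (a - b)⁴ = 8 a b (a² + b²)`, and the sums of `(a ± b)⁴` are rearranged by the
symmetry `(a, x) ↔ (b, y)` and by the shear `(a, x, b, y) ↦ (a - b, x, b, y + x)`, a bijection
from `{b < a}` onto `{x < y}`. Only the diagonal terms `x = y` and `a = b` survive; they are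
divisor sums, evaluated with Faulhaber's formula for `∑ a⁴`.
-/

open Finset PowerSeries

def mulAddReps (n : ℕ) : Finset ((ℕ × ℕ) × (ℕ × ℕ)) :=
  ((Icc 1 n ×ˢ Icc 1 n) ×ˢ (Icc 1 n ×ˢ Icc 1 n)).filter
    fun s => s.1.1 * s.1.2 + s.2.1 * s.2.2 = n

theorem mem_mulAddReps {n : ℕ} {s : (ℕ × ℕ) × (ℕ × ℕ)} :
    s ∈ mulAddReps n ↔
      0 < s.1.1 ∧ 0 < s.1.2 ∧ 0 < s.2.1 ∧ 0 < s.2.2 ∧ s.1.1 * s.1.2 + s.2.1 * s.2.2 = n := by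
  obtain ⟨⟨a, x⟩, b, y⟩ := s
  simp only [mulAddReps, mem_filter, mem_product, mem_Icc]
  constructor
  · rintro ⟨⟨⟨⟨ha, -⟩, hx, -⟩, ⟨hb, -⟩, hy, -⟩, h⟩
    exact ⟨ha, hx, hb, hy, h⟩
  · rintro ⟨ha, hx, hb, hy, rfl⟩
    refine ⟨⟨⟨⟨ha, ?_⟩, hx, ?_⟩, ⟨hb, ?_⟩, hy, ?_⟩, rfl⟩ <;> nlinarith

theorem Finset.sum_eq_sum_filter_lt_add_sum_filter_gt_add_sum_filter_eq {ι α M : Type*}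
    [LinearOrder α] [AddCommMonoid M] (s : Finset ι) (u v : ι → α) (f : ι → M) :
    ∑ i ∈ s, f i = ∑ i ∈ s with u i < v i, f i + ∑ i ∈ s with v i < u i, f i
      + ∑ i ∈ s with u i = v i, f i := by
  rw [add_assoc, ← sum_filter_add_sum_filter_not s (fun i => u i < v i),
    ← sum_filter_add_sum_filter_not (s.filter fun i => ¬u i < v i) (fun i => v i < u i),
    filter_filter, filter_filter]
  congr 2
  · exact sum_congr (filter_congr fun _ _ => ⟨And.right, fun h => ⟨h.not_gt, h⟩⟩)
      fun _ _ => rfl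
  · exact sum_congr
      (filter_congr fun _ _ => by rw [not_lt, not_lt, and_comm, ← le_antisymm_iff])
      fun _ _ => rfl

section Sums

variable {M : Type*} [AddCommMonoid M] (n : ℕ)

theorem sum_filter_mulAddReps_equiv (e : (ℕ × ℕ) × (ℕ × ℕ) ≃ (ℕ × ℕ) × (ℕ × ℕ))
    (he : ∀ s, e s ∈ mulAddReps n ↔ s ∈ mulAddReps n)
    (p : (ℕ × ℕ) × (ℕ × ℕ) → Prop) [DecidablePred p] (F : (ℕ × ℕ) × (ℕ × ℕ) → M) :
    ∑ s ∈ mulAddReps n with p s, F s = ∑ s ∈ mulAddReps n with p (e s), F (e s) :=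
  (sum_equiv e (fun s => by simp only [mem_filter, he]) fun _ _ => rfl).symm

theorem swap_mem_mulAddReps {s : (ℕ × ℕ) × (ℕ × ℕ)} :
    s.swap ∈ mulAddReps n ↔ s ∈ mulAddReps n := by
  simp only [mem_mulAddReps, Prod.fst_swap, Prod.snd_swap]
  constructor <;> rintro ⟨ha, hx, hb, hy, h⟩ <;> exact ⟨hb, hy, ha, hx, by omega⟩

theorem map_swap_mem_mulAddReps {s : (ℕ × ℕ) × (ℕ × ℕ)} :
    Prod.map Prod.swap Prod.swap s ∈ mulAddReps n ↔ s ∈ mulAddReps n := by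
  simp only [mem_mulAddReps, Prod.map_fst, Prod.map_snd, Prod.fst_swap, Prod.snd_swap, mul_comm]
  tauto

theorem sum_filter_mulAddReps_shear (F : (ℕ × ℕ) × (ℕ × ℕ) → M) :
    ∑ s ∈ mulAddReps n with s.2.1 < s.1.1, F s =
      ∑ s ∈ mulAddReps n with s.1.2 < s.2.2,
        F ((s.1.1 + s.2.1, s.1.2), (s.2.1, s.2.2 - s.1.2)) := by
  refine sum_nbij' (fun s => ((s.1.1 - s.2.1, s.1.2), (s.2.1, s.2.2 + s.1.2)))
    (fun s => ((s.1.1 + s.2.1, s.1.2), (s.2.1, s.2.2 - s.1.2))) ?_ ?_ ?_ ?_ ?_ <;>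
    rintro ⟨⟨a, x⟩, b, y⟩ hs <;> simp only [mem_filter, mem_mulAddReps] at hs ⊢ <;>
    obtain ⟨⟨ha, hx, hb, hy, h⟩, hlt⟩ := hs
  · refine ⟨⟨by omega, hx, hb, by omega, ?_⟩, by omega⟩
    zify [hlt.le] at h ⊢
    linear_combination h
  · refine ⟨⟨by omega, hx, hb, by omega, ?_⟩, by omega⟩
    zify [hlt.le] at h ⊢
    linear_combination h
  · rw [Nat.sub_add_cancel hlt.le, Nat.add_sub_cancel]
  · rw [Nat.add_sub_cancel, Nat.sub_add_cancel hlt.le]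
  · rw [Nat.sub_add_cancel hlt.le, Nat.add_sub_cancel]

theorem sum_filter_mulAddReps_snd_eq (F : (ℕ × ℕ) × (ℕ × ℕ) → M) :
    ∑ s ∈ mulAddReps n with s.1.2 = s.2.2, F s =
      ∑ de ∈ n.divisorsAntidiagonal, ∑ a ∈ Ico 1 de.1, F ((a, de.2), (de.1 - a, de.2)) := by
  rw [sum_sigma']
  refine sum_nbij' (fun s => ⟨(s.1.1 + s.2.1, s.1.2), s.1.1⟩)
    (fun p => ((p.2, p.1.2), (p.1.1 - p.2, p.1.2))) ?_ ?_ ?_ ?_ ?_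
  · rintro ⟨⟨a, x⟩, b, y⟩ hs
    simp only [mem_filter, mem_mulAddReps, mem_sigma, Nat.mem_divisorsAntidiagonal,
      mem_Ico] at hs ⊢
    obtain ⟨⟨ha, hx, hb, hy, h⟩, rfl⟩ := hs
    have hax := Nat.mul_pos ha hx
    exact ⟨⟨by rw [add_mul]; exact h, by omega⟩, ha, by omega⟩
  · rintro ⟨⟨d, e⟩, a⟩ hs
    simp only [mem_filter, mem_mulAddReps, mem_sigma, Nat.mem_divisorsAntidiagonal,
      mem_Ico] at hs ⊢
    obtain ⟨⟨rfl, hn⟩, ha, had⟩ := hs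
    have he := Nat.pos_of_ne_zero (right_ne_zero_of_mul hn)
    refine ⟨⟨ha, he, by omega, he, ?_⟩, trivial⟩
    rw [← add_mul, Nat.add_sub_cancel' had.le]
  · rintro ⟨⟨a, x⟩, b, y⟩ hs
    simp only [mem_filter] at hs
    simp only [Nat.add_sub_cancel_left, hs.2]
  · rintro ⟨⟨d, e⟩, a⟩ hs
    simp only [mem_sigma, mem_Ico] at hs
    simp only [Nat.add_sub_cancel' hs.2.2.le]
  · rintro ⟨⟨a, x⟩, b, y⟩ hs
    simp only [mem_filter] at hs
    simp only [Nat.add_sub_cancel_left, hs.2]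

theorem sum_filter_mulAddReps_fst_eq (F : (ℕ × ℕ) × (ℕ × ℕ) → M) :
    ∑ s ∈ mulAddReps n with s.1.1 = s.2.1, F s =
      ∑ de ∈ n.divisorsAntidiagonal, ∑ x ∈ Ico 1 de.2, F ((de.1, x), (de.1, de.2 - x)) := by
  rw [sum_filter_mulAddReps_equiv n (.prodCongr (.prodComm ℕ ℕ) (.prodComm ℕ ℕ))
    (fun _ => map_swap_mem_mulAddReps n)]
  simp only [Equiv.prodCongr_apply, Equiv.coe_prodComm, Prod.map_fst, Prod.map_snd,
    Prod.fst_swap]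
  rw [sum_filter_mulAddReps_snd_eq]
  exact sum_equiv (.prodComm ℕ ℕ) (fun _ => Nat.swap_mem_divisorsAntidiagonal.symm)
    fun _ _ => rfl

theorem sum_mulAddReps_eq_sum_antidiagonal (F : (ℕ × ℕ) × (ℕ × ℕ) → M) :
    ∑ s ∈ mulAddReps n, F s =
      ∑ ij ∈ antidiagonal n,
        ∑ s ∈ ij.1.divisorsAntidiagonal ×ˢ ij.2.divisorsAntidiagonal, F s := by
  rw [sum_sigma']
  refine sum_nbij' (fun s => ⟨(s.1.1 * s.1.2, s.2.1 * s.2.2), s⟩) (fun p => p.2) ?_ ?_ ?_ ?_ ?_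
  · rintro ⟨⟨a, x⟩, b, y⟩ hs
    simp only [mem_mulAddReps, mem_sigma, HasAntidiagonal.mem_antidiagonal, mem_product,
      Nat.mem_divisorsAntidiagonal] at hs ⊢
    obtain ⟨ha, hx, hb, hy, h⟩ := hs
    exact ⟨h, ⟨trivial, (Nat.mul_pos ha hx).ne'⟩, trivial, (Nat.mul_pos hb hy).ne'⟩
  · rintro ⟨⟨i, j⟩, ⟨a, x⟩, b, y⟩ hs
    simp only [mem_mulAddReps, mem_sigma, HasAntidiagonal.mem_antidiagonal, mem_product,
      Nat.mem_divisorsAntidiagonal] at hs ⊢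
    obtain ⟨rfl, ⟨rfl, hi⟩, rfl, hj⟩ := hs
    simp only [mul_ne_zero_iff] at hi hj
    exact ⟨by omega, by omega, by omega, by omega, rfl⟩
  · exact fun _ _ => rfl
  · rintro ⟨⟨i, j⟩, ⟨a, x⟩, b, y⟩ hs
    simp only [mem_sigma, HasAntidiagonal.mem_antidiagonal, mem_product,
      Nat.mem_divisorsAntidiagonal] at hs
    obtain ⟨-, ⟨rfl, -⟩, rfl, -⟩ := hs
    rfl
  · exact fun _ _ => rfl

theorem sum_mulAddReps_add (f : ℕ → M) :
    ∑ s ∈ mulAddReps n, f (s.1.1 + s.2.1) =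
      2 • ∑ s ∈ mulAddReps n with s.2.1 < s.1.1, f s.1.1 +
        ∑ de ∈ n.divisorsAntidiagonal, (de.1 - 1) • f de.1 := by
  have hswap : ∑ s ∈ mulAddReps n with s.2.2 < s.1.2, f (s.1.1 + s.2.1) =
      ∑ s ∈ mulAddReps n with s.1.2 < s.2.2, f (s.1.1 + s.2.1) := by
    rw [sum_filter_mulAddReps_equiv n (.prodComm _ _) fun _ => swap_mem_mulAddReps n]
    simp only [Equiv.coe_prodComm, Prod.fst_swap, Prod.snd_swap, add_comm]
    rfl
  have hdiag : ∑ s ∈ mulAddReps n with s.1.2 = s.2.2, f (s.1.1 + s.2.1) =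
      ∑ de ∈ n.divisorsAntidiagonal, (de.1 - 1) • f de.1 := by
    rw [sum_filter_mulAddReps_snd_eq]
    refine sum_congr rfl fun de _ => ?_
    rw [sum_congr rfl fun a ha => by rw [Nat.add_sub_cancel' (mem_Ico.1 ha).2.le], sum_const,
      Nat.card_Ico]
  rw [sum_eq_sum_filter_lt_add_sum_filter_gt_add_sum_filter_eq _ (fun s => s.1.2)
    (fun s => s.2.2), hswap, hdiag, sum_filter_mulAddReps_shear n fun s => f s.1.1, two_nsmul]

theorem sum_mulAddReps_sub (f : ℤ → M) (hf : ∀ t, f (-t) = f t) :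
    ∑ s ∈ mulAddReps n, f (s.1.1 - s.2.1) =
      2 • ∑ s ∈ mulAddReps n with s.1.2 < s.2.2, f s.1.1 +
        ∑ de ∈ n.divisorsAntidiagonal, (de.2 - 1) • f 0 := by
  have hswap : ∑ s ∈ mulAddReps n with s.1.1 < s.2.1, f (s.1.1 - s.2.1) =
      ∑ s ∈ mulAddReps n with s.2.1 < s.1.1, f (s.1.1 - s.2.1) := by
    rw [sum_filter_mulAddReps_equiv n (.prodComm _ _) fun _ => swap_mem_mulAddReps n]
    simp only [Equiv.coe_prodComm, Prod.fst_swap, Prod.snd_swap]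
    exact sum_congr rfl fun s _ => by rw [← neg_sub, hf]
  have hshear : ∑ s ∈ mulAddReps n with s.2.1 < s.1.1, f (s.1.1 - s.2.1) =
      ∑ s ∈ mulAddReps n with s.1.2 < s.2.2, f s.1.1 := by
    rw [sum_filter_mulAddReps_shear]
    simp only [Nat.cast_add, add_sub_cancel_right]
  have hdiag : ∑ s ∈ mulAddReps n with s.1.1 = s.2.1, f (s.1.1 - s.2.1) =
      ∑ de ∈ n.divisorsAntidiagonal, (de.2 - 1) • f 0 := by
    rw [sum_filter_mulAddReps_fst_eq]
    simp only [sub_self, sum_const, Nat.card_Ico]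
  rw [sum_eq_sum_filter_lt_add_sum_filter_gt_add_sum_filter_eq _ (fun s => s.1.1)
    (fun s => s.2.1), hswap, hshear, hdiag, two_nsmul]

theorem sum_filter_mulAddReps_snd_lt_add_sum_Ico {M : Type*} [AddCancelCommMonoid M]
    (f : ℕ → M) :
    ∑ s ∈ mulAddReps n with s.1.2 < s.2.2, f s.1.1 +
        ∑ de ∈ n.divisorsAntidiagonal, ∑ a ∈ Ico 1 de.1, f a =
      ∑ s ∈ mulAddReps n with s.2.1 < s.1.1, f s.1.1 +
        ∑ de ∈ n.divisorsAntidiagonal, (de.2 - 1) • f de.1 := by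
  have hsmall : ∑ s ∈ mulAddReps n with s.1.1 < s.2.1, f s.1.1 =
      ∑ s ∈ mulAddReps n with s.2.2 < s.1.2, f s.1.1 :=
    calc _ = ∑ s ∈ mulAddReps n with s.2.1 < s.1.1, f s.2.1 := by
          rw [sum_filter_mulAddReps_equiv n (.prodComm _ _) fun _ => swap_mem_mulAddReps n]
          rfl
      _ = ∑ s ∈ mulAddReps n with s.1.2 < s.2.2, f s.2.1 :=
          sum_filter_mulAddReps_shear n fun s => f s.2.1
      _ = _ := by
          rw [sum_filter_mulAddReps_equiv n (.prodComm _ _) fun _ => swap_mem_mulAddReps n]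
          rfl
  have hdiag : ∑ s ∈ mulAddReps n with s.1.1 = s.2.1, f s.1.1 =
      ∑ de ∈ n.divisorsAntidiagonal, (de.2 - 1) • f de.1 := by
    rw [sum_filter_mulAddReps_fst_eq]
    simp only [sum_const, Nat.card_Ico]
  apply add_left_cancel (a := ∑ s ∈ mulAddReps n with s.2.2 < s.1.2, f s.1.1)
  calc _ = ∑ s ∈ mulAddReps n, f s.1.1 := by
        rw [sum_eq_sum_filter_lt_add_sum_filter_gt_add_sum_filter_eq (mulAddReps n)
          (fun s => s.1.2) (fun s => s.2.2), sum_filter_mulAddReps_snd_eq]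
        abel
    _ = _ := by
        rw [sum_eq_sum_filter_lt_add_sum_filter_gt_add_sum_filter_eq (mulAddReps n)
          (fun s => s.1.1) (fun s => s.2.1), hsmall, hdiag]
        abel

end Sums

theorem sum_Ico_one_pow_four (d : ℕ) :
    ∑ a ∈ Ico 1 d, (a : ℚ) ^ 4 = (6 * d ^ 5 - 15 * d ^ 4 + 10 * d ^ 3 - d) / 30 := by
  induction d with
  | zero => simp
  | succ d ih =>
    rcases d.eq_zero_or_pos with rfl | hd
    · norm_num
    · rw [sum_Ico_succ_top hd, ih]
      push_cast
      ring

theorem sigmaFn_eq_sum_divisorsAntidiagonal (k n : ℕ) :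
    (sigmaFn k n : ℚ) = ∑ de ∈ n.divisorsAntidiagonal, (de.1 : ℚ) ^ k := by
  rw [sigmaFn, Nat.sum_divisorsAntidiagonal fun d _ => (d : ℚ) ^ k]
  push_cast
  rfl

theorem sum_mulAddReps_mul_pow_three (n : ℕ) :
    240 * ∑ s ∈ mulAddReps n, (s.1.1 : ℚ) * s.2.1 ^ 3 =
      21 * sigmaFn 5 n + 10 * sigmaFn 3 n - sigmaFn 1 n - 30 * n * sigmaFn 3 n := by
  have hsymm : ∑ s ∈ mulAddReps n, (s.1.1 : ℚ) ^ 3 * s.2.1 =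
      ∑ s ∈ mulAddReps n, (s.1.1 : ℚ) * s.2.1 ^ 3 :=
    sum_equiv (.prodComm _ _) (fun _ => (swap_mem_mulAddReps n).symm) fun _ _ => mul_comm _ _
  have hbinom : 16 * ∑ s ∈ mulAddReps n, (s.1.1 : ℚ) * s.2.1 ^ 3 =
      ∑ s ∈ mulAddReps n, ((s.1.1 + s.2.1 : ℕ) : ℚ) ^ 4 -
        ∑ s ∈ mulAddReps n, ((s.1.1 - s.2.1 : ℤ) : ℚ) ^ 4 := by
    have hpt : ∑ s ∈ mulAddReps n,
          (((s.1.1 + s.2.1 : ℕ) : ℚ) ^ 4 - ((s.1.1 - s.2.1 : ℤ) : ℚ) ^ 4) =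
        ∑ s ∈ mulAddReps n, (8 * ((s.1.1 : ℚ) ^ 3 * s.2.1) + 8 * ((s.1.1 : ℚ) * s.2.1 ^ 3)) :=
      sum_congr rfl fun s _ => by push_cast; ring
    rw [sum_add_distrib, ← mul_sum, ← mul_sum, sum_sub_distrib] at hpt
    linear_combination -hpt - 8 * hsymm
  rw [sum_mulAddReps_add n fun m => (m : ℚ) ^ 4,
    sum_mulAddReps_sub n (fun t => (t : ℚ) ^ 4) fun t => by push_cast; ring] at hbinom
  have hlt := sum_filter_mulAddReps_snd_lt_add_sum_Ico n fun m => (m : ℚ) ^ 4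
  have hD1 : ∑ de ∈ n.divisorsAntidiagonal, ∑ a ∈ Ico 1 de.1, (a : ℚ) ^ 4 =
      (6 * sigmaFn 5 n - 15 * sigmaFn 4 n + 10 * sigmaFn 3 n - sigmaFn 1 n) / 30 := by
    simp only [sum_Ico_one_pow_four, sigmaFn_eq_sum_divisorsAntidiagonal, pow_one, mul_sum,
      ← sum_sub_distrib, ← sum_add_distrib, sum_div]
  have hD2 : ∑ de ∈ n.divisorsAntidiagonal, (de.1 - 1) • (de.1 : ℚ) ^ 4 =
      sigmaFn 5 n - sigmaFn 4 n := by
    rw [sigmaFn_eq_sum_divisorsAntidiagonal, sigmaFn_eq_sum_divisorsAntidiagonal,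
      ← sum_sub_distrib]
    refine sum_congr rfl fun de hde => ?_
    rw [nsmul_eq_mul,
      Nat.cast_pred (Nat.pos_of_ne_zero (Nat.left_ne_zero_of_mem_divisorsAntidiagonal hde))]
    ring
  have hD3 : ∑ de ∈ n.divisorsAntidiagonal, (de.2 - 1) • (de.1 : ℚ) ^ 4 =
      n * sigmaFn 3 n - sigmaFn 4 n := by
    rw [sigmaFn_eq_sum_divisorsAntidiagonal, sigmaFn_eq_sum_divisorsAntidiagonal, mul_sum,
      ← sum_sub_distrib]
    refine sum_congr rfl fun de hde => ?_
    have hn : (de.1 : ℚ) * de.2 = n := by exact_mod_cast (Nat.mem_divisorsAntidiagonal.1 hde).1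
    rw [nsmul_eq_mul,
      Nat.cast_pred (Nat.pos_of_ne_zero (Nat.right_ne_zero_of_mem_divisorsAntidiagonal hde)), ← hn]
    ring
  simp only [Int.cast_natCast, Int.cast_zero, zero_pow four_ne_zero, smul_zero, sum_const_zero,
    add_zero] at hbinom
  linear_combination 15 * hbinom - 30 * hlt + 30 * hD1 + 15 * hD2 - 30 * hD3

def sigmaSeries (k : ℕ) : PowerSeries ℚ :=
  PowerSeries.mk fun n => (sigmaFn k n : ℚ)

theorem coeff_sigmaSeries_mul_sigmaSeries (j k n : ℕ) :
    coeff n (sigmaSeries j * sigmaSeries k) =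
      ∑ s ∈ mulAddReps n, (s.1.1 : ℚ) ^ j * s.2.1 ^ k := by
  rw [coeff_mul, sum_mulAddReps_eq_sum_antidiagonal]
  refine sum_congr rfl fun ij _ => ?_
  rw [sigmaSeries, sigmaSeries, coeff_mk, coeff_mk, sigmaFn_eq_sum_divisorsAntidiagonal,
    sigmaFn_eq_sum_divisorsAntidiagonal, sum_mul_sum, sum_product]

theorem PowerSeries.mk_ite_eq_one_add_C_mul {R : Type*} [Semiring R] (c : R) (f : ℕ → R)
    (hf : f 0 = 0) : mk (fun n => if n = 0 then 1 else c * f n) = 1 + C c * mk f := by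
  ext (_ | n) <;> simp [coeff_one, hf]

theorem Eis2_eq : Eis2 = 1 + C (-24) * sigmaSeries 1 :=
  mk_ite_eq_one_add_C_mul _ _ (by simp [sigmaFn])

theorem Eis4_eq : Eis4 = 1 + C 240 * sigmaSeries 3 :=
  mk_ite_eq_one_add_C_mul _ _ (by simp [sigmaFn])

theorem Eis6_eq : Eis6 = 1 + C (-504) * sigmaSeries 5 :=
  mk_ite_eq_one_add_C_mul _ _ (by simp [sigmaFn])

theorem coeff_Dq (n : ℕ) (F : PowerSeries ℚ) : coeff n (Dq F) = n * coeff n F :=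
  coeff_mk _ _

/-- Ramanujan's identity: q·(d/dq)E₄ = (E₂·E₄ − E₆)/3. -/
theorem ramanujan_D_E4 : Dq Eis4 = PowerSeries.C (R := ℚ) (1 / 3) * (Eis2 * Eis4 - Eis6) := by
  have hexpand : Eis2 * Eis4 - Eis6 = C (-24) * sigmaSeries 1 + C 240 * sigmaSeries 3 -
      C (-504) * sigmaSeries 5 + C (-24) * (C 240 * (sigmaSeries 1 * sigmaSeries 3)) := by
    rw [Eis2_eq, Eis4_eq, Eis6_eq]
    ring
  ext n
  rw [hexpand, coeff_Dq, Eis4_eq]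
  simp only [map_add, map_sub, coeff_C_mul, coeff_one, coeff_sigmaSeries_mul_sigmaSeries, pow_one]
  simp only [sigmaSeries, coeff_mk]
  have hconst : (n : ℚ) * (if n = 0 then 1 else 0) = 0 := by
    split_ifs with h <;> simp [h]
  linear_combination hconst + 8 * sum_mulAddReps_mul_pow_three n
end
end
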